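/- In the allegory A_P of an elementary existential doctrine P, composition satisfies the modular law: for θ ∈ P(A×B), ζ ∈ P(B×C), ξ ∈ P(A×C), one has (ζ∘θ) ∧ ξ ≤ ζ∘(θ ∧ (ζ°∘ξ)). -/

import Mathlib

open CategoryTheory CategoryTheory.Limits

universe u v w

/-- Layer 0: an indexed family of inf-semilattices over a category. -/
structure DocL0 (C : Type u) [Category.{v} C] where
  obj : C → Type w
  semi : ∀ A : C, SemilatticeInf (obj A)

attribute [instance] DocL0.semi

/-- Layer 1: fibrewise top elements. -/
structure DocL1 (C : Type u) [Category.{v} C] extends DocL0.{u, v, w} C where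
  otop : ∀ A : C, OrderTop (obj A)

attribute [instance] DocL1.otop

/-- A doctrine: an indexed inf-semilattice `P : Cᵒᵖ → InfSL`. -/
structure Doctrine (C : Type u) [Category.{v} C] extends DocL1.{u, v, w} C where
  map : ∀ {A B : C}, (A ⟶ B) → obj B → obj A
  map_id : ∀ (A : C) (x : obj A), map (𝟙 A) x = x
  map_comp : ∀ {A B D : C} (f : A ⟶ B) (g : B ⟶ D) (x : obj D),
    map (f ≫ g) x = map f (map g x)
  map_mono : ∀ {A B : C} (f : A ⟶ B), Monotone (map f)
  map_inf : ∀ {A B : C} (f : A ⟶ B) (x y : obj B),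
    map f (x ⊓ y) = map f x ⊓ map f y
  map_top : ∀ {A B : C} (f : A ⟶ B), map f (⊤ : obj B) = (⊤ : obj A)

/-- An elementary existential doctrine. -/
structure EED (C : Type u) [Category.{v} C] [HasBinaryProducts C] extends
    Doctrine.{u, v, w} C where
  delta : ∀ A : C, obj (A ⨯ A)
  elem_i : ∀ {A : C} (α : obj A) (β : obj (A ⨯ A)),
    map prod.fst α ⊓ delta A ≤ β ↔ α ≤ map (diag A) β
  elem_ii : ∀ {X A : C} (α : obj (X ⨯ A)) (β : obj ((X ⨯ A) ⨯ A)),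
    map prod.fst α ⊓ map (prod.lift (prod.fst ≫ prod.snd) prod.snd) (delta A) ≤ β ↔
      α ≤ map (prod.lift (𝟙 (X ⨯ A)) prod.snd) β
  ex : ∀ {A B : C}, (A ⟶ B) → obj A → obj B
  ex_adj : ∀ {A B : C} (f : A ⟶ B) (α : obj A) (β : obj B),
    ex f α ≤ β ↔ α ≤ map f β
  frobenius : ∀ {A B : C} (f : A ⟶ B) (α : obj B) (β : obj A),
    ex f (map f α ⊓ β) = α ⊓ ex f β
  beck_chevalley : ∀ {A A' B : C} (f : A' ⟶ A) (β : obj (A ⨯ B)),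
    ex prod.fst (map (prod.map f (𝟙 B)) β) = map f (ex prod.fst β)

namespace EED

variable {C : Type u} [Category.{v} C] [HasBinaryProducts C] (P : EED.{u, v, w} C)

/-- Relational composition `∃_{p₂}(P_{⟨p₁,p₂⟩}(θ) ∧ P_{⟨p₂,p₃⟩}(ζ))`. -/
noncomputable def comp {A B D : C} (θ : P.obj (A ⨯ B)) (ζ : P.obj (B ⨯ D)) : P.obj (A ⨯ D) :=
  P.ex (prod.lift (prod.fst ≫ prod.fst) prod.snd)
    (P.map prod.fst θ ⊓ P.map (prod.lift (prod.fst ≫ prod.snd) prod.snd) ζ)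

/-- Opposite relation `P_{⟨p₂,p₁⟩}(θ)`. -/
noncomputable def op {A B : C} (θ : P.obj (A ⨯ B)) : P.obj (B ⨯ A) :=
  P.map (prod.lift prod.snd prod.fst) θ

/-- `ρ ≤ P_{⟨p₂,p₁⟩}(ρ)`. -/
def SymmRel {A : C} (ρ : P.obj (A ⨯ A)) : Prop :=
  ρ ≤ P.map (prod.lift prod.snd prod.fst) ρ

/-- `P_{⟨p₁,p₂⟩}(ρ) ∧ P_{⟨p₂,p₃⟩}(ρ) ≤ P_{⟨p₁,p₃⟩}(ρ)` in `P((A×A)×A)`. -/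
def TransRel {A : C} (ρ : P.obj (A ⨯ A)) : Prop :=
  P.map prod.fst ρ ⊓ P.map (prod.lift (prod.fst ≫ prod.snd) prod.snd) ρ ≤
    P.map (prod.lift (prod.fst ≫ prod.fst) prod.snd) ρ

/-- `δ_A ≤ ρ`. -/
def ReflRel {A : C} (ρ : P.obj (A ⨯ A)) : Prop := P.delta A ≤ ρ

/-- A `P`-equivalence relation. -/
def EqRel {A : C} (ρ : P.obj (A ⨯ A)) : Prop :=
  P.ReflRel ρ ∧ P.SymmRel ρ ∧ P.TransRel ρ

/-- Conditions (i)–(v) for an arrow `φ : ⟨A,ρ⟩ → ⟨B,σ⟩` of the exact completion `T_P`. -/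
def IsArrow {A B : C} (ρ : P.obj (A ⨯ A)) (σ : P.obj (B ⨯ B)) (φ : P.obj (A ⨯ B)) : Prop :=
  (φ ≤ P.map (prod.lift prod.fst prod.fst) ρ ⊓ P.map (prod.lift prod.snd prod.snd) σ) ∧
  (P.map prod.fst ρ ⊓ P.map (prod.lift (prod.fst ≫ prod.snd) prod.snd) φ ≤
      P.map (prod.lift (prod.fst ≫ prod.fst) prod.snd) φ) ∧
  (P.map prod.fst φ ⊓ P.map (prod.lift (prod.fst ≫ prod.snd) prod.snd) σ ≤
      P.map (prod.lift (prod.fst ≫ prod.fst) prod.snd) φ) ∧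
  (P.map prod.fst φ ⊓ P.map (prod.lift (prod.fst ≫ prod.fst) prod.snd) φ ≤
      P.map (prod.lift (prod.fst ≫ prod.snd) prod.snd) σ) ∧
  (P.map (diag A) ρ ≤ P.ex prod.fst φ)

/-- The graph relation `L[f] = ∃_{p₂}(P_{⟨p₁,p₂⟩}(ρ) ∧ P_{⟨f∘p₂,p₃⟩}(σ))` in `P(A×B)`. -/
noncomputable def Lrel {A B : C} (f : A ⟶ B) (ρ : P.obj (A ⨯ A)) (σ : P.obj (B ⨯ B)) : P.obj (A ⨯ B) :=
  P.ex (prod.lift (prod.fst ≫ prod.fst) prod.snd)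
    (P.map prod.fst ρ ⊓ P.map (prod.lift (prod.fst ≫ prod.snd ≫ f) prod.snd) σ)

end EED

/-
The proof is the usual internal-logic argument. By Frobenius, `(ζ∘θ) ∧ ξ` is `∃b. θ(a,b) ∧ ζ(b,d) ∧ ξ(a,d)`.
Under this quantifier, `ξ(a,d) ∧ ζ(b,d)` already witnesses `(ζ°∘ξ)(a,b)` with `d` as the middle variable,
so the body lies below `(θ ∧ ζ°∘ξ)(a,b) ∧ ζ(b,d)`, and monotonicity of `∃` concludes.
-/

namespace EED

variable {C : Type u} [Category.{v} C] [HasBinaryProducts C] (P : EED.{u, v, w} C)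

theorem ex_mono {X Y : C} (f : X ⟶ Y) : Monotone (P.ex f) := fun α β hαβ =>
  (P.ex_adj f α _).mpr (hαβ.trans ((P.ex_adj f β _).mp le_rfl))

theorem le_map_ex {X Y : C} (f : X ⟶ Y) (α : P.obj X) : α ≤ P.map f (P.ex f α) :=
  (P.ex_adj f α _).mp le_rfl

theorem ex_inf_eq {X Y : C} (f : X ⟶ Y) (α : P.obj X) (β : P.obj Y) :
    P.ex f α ⊓ β = P.ex f (α ⊓ P.map f β) := by
  rw [inf_comm, ← P.frobenius, inf_comm]

theorem map_lift_op {Z A B : C} (f : Z ⟶ A) (g : Z ⟶ B) (θ : P.obj (A ⨯ B)) :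
    P.map (prod.lift g f) (P.op θ) = P.map (prod.lift f g) θ := by
  rw [op, ← P.map_comp]
  congr 1
  ext <;> simp only [Category.assoc, prod.lift_fst, prod.lift_snd]

theorem map_lift_inf_map_lift_le_comp {Z A B D : C} (f : Z ⟶ A) (g : Z ⟶ B) (k : Z ⟶ D)
    (θ : P.obj (A ⨯ B)) (ζ : P.obj (B ⨯ D)) :
    P.map (prod.lift f g) θ ⊓ P.map (prod.lift g k) ζ ≤ P.map (prod.lift f k) (P.comp θ ζ) := by
  let h : Z ⟶ (A ⨯ B) ⨯ D := prod.lift (prod.lift f g) k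
  have h_fst : h ≫ prod.fst = prod.lift f g := prod.lift_fst _ _
  have h_mid : h ≫ prod.lift (prod.fst ≫ prod.snd) prod.snd = prod.lift g k := by
    ext <;> simp only [h, Category.assoc, prod.lift_fst, prod.lift_snd, prod.lift_fst_assoc]
  have h_out : h ≫ prod.lift (prod.fst ≫ prod.fst) prod.snd = prod.lift f k := by
    ext <;> simp only [h, Category.assoc, prod.lift_fst, prod.lift_snd, prod.lift_fst_assoc]
  calc P.map (prod.lift f g) θ ⊓ P.map (prod.lift g k) ζ
      = P.map h (P.map prod.fst θ ⊓ P.map (prod.lift (prod.fst ≫ prod.snd) prod.snd) ζ) := by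
        rw [P.map_inf, ← P.map_comp, ← P.map_comp, h_fst, h_mid]
    _ ≤ P.map h (P.map (prod.lift (prod.fst ≫ prod.fst) prod.snd) (P.comp θ ζ)) :=
        P.map_mono h (P.le_map_ex _ _)
    _ = P.map (prod.lift f k) (P.comp θ ζ) := by rw [← P.map_comp, h_out]

end EED

/-- the modular law in the allegory `A_P`:
`(ζ∘θ) ∧ ξ ≤ ζ∘(θ ∧ (ζ°∘ξ))`. -/
theorem allegory_modular_law
    {C : Type u} [Category.{v} C] [HasBinaryProducts C] (P : EED.{u, v, w} C)
    {A B D : C} (θ : P.obj (A ⨯ B)) (ζ : P.obj (B ⨯ D)) (ξ : P.obj (A ⨯ D)) :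
    P.comp θ ζ ⊓ ξ ≤ P.comp (θ ⊓ P.comp ξ (P.op ζ)) ζ := by
  let a : (A ⨯ B) ⨯ D ⟶ A := prod.fst ≫ prod.fst
  let b : (A ⨯ B) ⨯ D ⟶ B := prod.fst ≫ prod.snd
  let d : (A ⨯ B) ⨯ D ⟶ D := prod.snd
  have witness : P.map (prod.lift a d) ξ ⊓ P.map (prod.lift b d) ζ ≤
      P.map prod.fst (P.comp ξ (P.op ζ)) := by
    have hab : prod.lift a b = prod.fst := by
      rw [← prod.comp_lift, prod.lift_fst_snd, Category.comp_id]
    simpa only [P.map_lift_op, hab] using P.map_lift_inf_map_lift_le_comp a d b ξ (P.op ζ)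
  rw [EED.comp, P.ex_inf_eq]
  refine P.ex_mono _ ?_
  rw [P.map_inf]
  refine le_inf (le_inf (inf_le_left.trans inf_le_left) ?_) (inf_le_left.trans inf_le_right)
  exact (le_inf inf_le_right (inf_le_left.trans inf_le_right)).trans witness
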